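/- arXiv:1709.03389 — 2 statements merged into one kernel-verified Lean document; each statement's English description precedes it below -/
import Mathlib

section
/- Let q = 6 + 2√5 and let W₁₀ᴱ(x,y) = x¹⁰ + (1350+600√5)x⁶y⁴ − (5100+2280√5)x⁴y⁶ + (36225+16200√5)x²y⁸ + (30500+13640√5)y¹⁰. The zeta polynomial of W₁₀ᴱ (with respect to q) equals P₁₀ᴱ(T) = (1/7)·[(520+232√5)T⁴ − (320+144√5)T³ − (168+76√5)T² − (30+14√5)T + 5+2√5]. -/
/- STATEMENT 11: the zeta polynomial (w.r.t. q = 6+2√5) of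
W₁₀ᴱ = x¹⁰ + (1350+600√5)x⁶y⁴ - (5100+2280√5)x⁴y⁶ + (36225+16200√5)x²y⁸ + (30500+13640√5)y¹⁰
is P₁₀ᴱ(T) = (1/7)[(520+232√5)T⁴ - (320+144√5)T³ - (168+76√5)T² - (30+14√5)T + 5+2√5]. -/

noncomputable section

abbrev Cxy : Type := MvPolynomial (Fin 2) ℂ

/-- The formal power series expansion of `1/((1-T)(1-qT))`. -/
def geomQ (q : ℝ) : PowerSeries Cxy :=
  PowerSeries.mk fun m => algebraMap ℂ Cxy (∑ j ∈ Finset.range (m + 1), (q : ℂ) ^ j)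

/-- A polynomial `P(T) ∈ ℂ[T]` viewed as a power series with coefficients in ℂ[x,y]. -/
def polyToSeries (P : Polynomial ℂ) : PowerSeries Cxy :=
  PowerSeries.mk fun m => algebraMap ℂ Cxy (P.coeff m)

/-- The power series `(y(1-T) + xT)^n`. -/
def bodySeries (n : ℕ) : PowerSeries Cxy :=
  (PowerSeries.C (MvPolynomial.X 1) * (1 - PowerSeries.X)
    + PowerSeries.C (MvPolynomial.X 0) * PowerSeries.X) ^ n

/-- `P` is a (= the) zeta polynomial of `W` (of shape `x^n + ∑_{i=d}^n A_i x^{n-i}y^i`). -/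
def IsZetaPoly (q : ℝ) (n d : ℕ) (W : Cxy) (P : Polynomial ℂ) : Prop :=
  P.degree ≤ (n - d : ℕ) ∧
  PowerSeries.coeff (n - d) (polyToSeries P * geomQ q * bodySeries n)
    = MvPolynomial.C (((q : ℂ) - 1)⁻¹) * (W - MvPolynomial.X 0 ^ n)

def sqrt5C : ℂ := (Real.sqrt 5 : ℝ)

/-- The extremal invariant polynomial of degree 10 (n = 10, d = 4). -/
def W10E : Cxy :=
  MvPolynomial.X 0 ^ 10
    + MvPolynomial.C (1350 + 600 * sqrt5C) * MvPolynomial.X 0 ^ 6 * MvPolynomial.X 1 ^ 4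
    - MvPolynomial.C (5100 + 2280 * sqrt5C) * MvPolynomial.X 0 ^ 4 * MvPolynomial.X 1 ^ 6
    + MvPolynomial.C (36225 + 16200 * sqrt5C) * MvPolynomial.X 0 ^ 2 * MvPolynomial.X 1 ^ 8
    + MvPolynomial.C (30500 + 13640 * sqrt5C) * MvPolynomial.X 1 ^ 10

def P10E : Polynomial ℂ :=
  Polynomial.C (1 / 7 : ℂ) *
    (Polynomial.C (520 + 232 * sqrt5C) * Polynomial.X ^ 4
      - Polynomial.C (320 + 144 * sqrt5C) * Polynomial.X ^ 3
      - Polynomial.C (168 + 76 * sqrt5C) * Polynomial.X ^ 2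
      - Polynomial.C (30 + 14 * sqrt5C) * Polynomial.X
      + Polynomial.C (5 + 2 * sqrt5C))

/-! Since `y(1-T)+xT = y + (x-y)T`, the coefficient of `T^m` in
`P(T)/((1-T)(1-qT)) · (y(1-T)+xT)^n` is `∑_{i ≤ m} ρ_i C(n, m-i) y^(n-m+i) (x-y)^(m-i)`, with `ρ_i`
the coefficients of the zeta function `P(T)/((1-T)(1-qT))`. For `W₁₀ᴱ` the claim is thus an
identity of binary forms over `ℚ(√5)`; evaluated at each point of `ℂ²` it becomes a polynomial
identity in `√5` that holds modulo `√5² = 5`. -/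

open MvPolynomial

lemma coeff_bodySeries (n m : ℕ) :
    PowerSeries.coeff m (bodySeries n) = (n.choose m : Cxy) * X 1 ^ (n - m) * (X 0 - X 1) ^ m := by
  have hbody : bodySeries n
      = (PowerSeries.C (X 0 - X 1 : Cxy) * PowerSeries.X + PowerSeries.C (X 1)) ^ n := by
    rw [bodySeries, map_sub]
    ring
  have hterm : ∀ k, (PowerSeries.C (X 0 - X 1 : Cxy) * PowerSeries.X) ^ k
      * PowerSeries.C (X 1) ^ (n - k) * (n.choose k : PowerSeries Cxy)
      = PowerSeries.C ((X 0 - X 1) ^ k * X 1 ^ (n - k) * (n.choose k : Cxy))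
        * PowerSeries.X ^ k := by
    intro k
    simp only [map_mul, map_pow, map_natCast]
    ring
  simp only [hbody, add_pow, hterm, map_sum, PowerSeries.coeff_C_mul_X_pow, Finset.sum_ite_eq,
    Finset.mem_range]
  split_ifs with hm
  · ring
  · simp [Nat.choose_eq_zero_of_lt (by omega : n < m)]

/-- The coefficients of the zeta function `P(T)/((1-T)(1-qT))`. -/
def zetaFunctionCoeff (q : ℝ) (P : Polynomial ℂ) (k : ℕ) : ℂ :=
  ∑ i ∈ Finset.range (k + 1), P.coeff i * ∑ j ∈ Finset.range (k - i + 1), (q : ℂ) ^ j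

lemma coeff_polyToSeries_mul_geomQ (q : ℝ) (P : Polynomial ℂ) (k : ℕ) :
    PowerSeries.coeff k (polyToSeries P * geomQ q) = C (zetaFunctionCoeff q P k) := by
  rw [PowerSeries.coeff_mul, Finset.Nat.sum_antidiagonal_eq_sum_range_succ
    (fun i j => PowerSeries.coeff i (polyToSeries P) * PowerSeries.coeff j (geomQ q))]
  simp only [polyToSeries, geomQ, PowerSeries.coeff_mk, zetaFunctionCoeff, map_sum, map_mul,
    algebraMap_eq]

lemma coeff_polyToSeries_mul_geomQ_mul_bodySeries (q : ℝ) (P : Polynomial ℂ) (n m : ℕ) :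
    PowerSeries.coeff m (polyToSeries P * geomQ q * bodySeries n)
      = ∑ i ∈ Finset.range (m + 1), C (zetaFunctionCoeff q P i) *
          ((n.choose (m - i) : Cxy) * X 1 ^ (n - (m - i)) * (X 0 - X 1) ^ (m - i)) := by
  rw [PowerSeries.coeff_mul, Finset.Nat.sum_antidiagonal_eq_sum_range_succ
    (fun i j =>
      PowerSeries.coeff i (polyToSeries P * geomQ q) * PowerSeries.coeff j (bodySeries n))]
  simp only [coeff_polyToSeries_mul_geomQ, coeff_bodySeries]

lemma sqrt5C_sq : sqrt5C ^ 2 = 5 := by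
  rw [sqrt5C, ← Complex.ofReal_pow, Real.sq_sqrt (by norm_num)]
  norm_num

theorem zeta_poly_of_W10E : IsZetaPoly (6 + 2 * Real.sqrt 5) 10 4 W10E P10E := by
  refine ⟨?_, ?_⟩
  · show P10E.degree ≤ (6 : ℕ)
    unfold P10E
    compute_degree!
  · show PowerSeries.coeff 6 _ = _
    rw [coeff_polyToSeries_mul_geomQ_mul_bodySeries]
    refine MvPolynomial.funext fun v => ?_
    have hq : ((6 + 2 * Real.sqrt 5 : ℝ) : ℂ) = 6 + 2 * sqrt5C := by simp [sqrt5C]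
    have hs := sqrt5C_sq
    simp only [Finset.sum_range_succ, Finset.sum_range_zero, zetaFunctionCoeff, P10E, W10E, hq,
      Polynomial.coeff_C_mul, Polynomial.coeff_add, Polynomial.coeff_sub,
      Polynomial.coeff_C, Polynomial.coeff_X]
    norm_num [Nat.choose]
    grind

end
end

section
/- Let q be a real number with q > 0 and q ≠ 1, and let W(x,y) = x^n + Σ_{i=d}^n A_i x^{n−i} y^i (A_d ≠ 0, 2 ≤ d ≤ n) be σ_q-invariant, i.e., W((x+(q−1)y)/√q, (x−y)/√q) = W(x,y). Let P(T) be the zeta polynomial of W and put g = n/2 + 1 − d. Then P satisfies the functional equation P(T) = P(1/(qT))·q^g·T^{2g} for all nonzero complex T (where 2g = n + 2 − 2d is a nonnegative integer and q^g denotes the real power of the positive real q). -/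
/- STATEMENT 19 (functional equation): if W = x^n + ∑_{i=d}^n A_i x^{n-i}y^i
(A_d ≠ 0, 2 ≤ d ≤ n) is σ_q-invariant and P is its zeta polynomial, then with
g = n/2 + 1 - d one has P(T) = P(1/(qT)) q^g T^{2g} for all T ≠ 0, where
2g = n + 2 - 2d is a nonnegative integer. -/

noncomputable section

/-- The action of `σ_q = (1/√q)[[1,q-1],[1,-1]]`: substitute
`x ↦ (x+(q-1)y)/√q`, `y ↦ (x-y)/√q`. -/
def actSigma (q : ℝ) (f : Cxy) : Cxy :=
  MvPolynomial.aeval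
    ![MvPolynomial.C ((Real.sqrt q : ℂ))⁻¹ *
        (MvPolynomial.X 0 + MvPolynomial.C ((q : ℂ) - 1) * MvPolynomial.X 1),
      MvPolynomial.C ((Real.sqrt q : ℂ))⁻¹ * (MvPolynomial.X 0 - MvPolynomial.X 1)] f

/-!
Let `Z(T) = P(T)/((1-T)(1-qT)) = ∑ γ_N T^N` and `e = 1/(q-1)`. Substituting `x ↦ X + 1, y ↦ 1`
turns the defining identity of `P` into `∑ binom(n,k) γ_{r-k} X^k = e (W(X+1,1) - (X+1)^n)` with
`r = n - d`; substituting `σ_q(x), σ_q(y)` first and using `W^{σ_q} = W` gives the same right-hand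
side up to an explicit binomial term, with the coefficients read backwards. Comparing coefficients
shows that `q^{-N/2} (γ_N + e)` is symmetric under `N ↦ n - 2d - N`. The coefficients of `P` are
the second differences `γ_N - (1+q) γ_{N-1} + q γ_{N-2}`, in which the shift by `e` cancels, so
they inherit the symmetry `p_{2g-N} = q^{g-N} p_N`: this is the functional equation. Finally
`p_0 binom(n,d) = e A_d ≠ 0`, which forces `2g ≥ 0`.
-/

section PowerSeries

open PowerSeries LaurentSeries

variable {R : Type*} [CommRing R]

def geomSeries (q : R) : R⟦X⟧ := mk fun m => ∑ j ∈ Finset.range (m + 1), q ^ j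

theorem geomSeries_eq_mul (q : R) : geomSeries q = rescale q (mk 1) * mk 1 := by
  ext m
  simp [geomSeries, coeff_mul, rescale_mk, Finset.Nat.sum_antidiagonal_eq_sum_range_succ_mk]

theorem geomSeries_mul (q : R) : geomSeries q * ((1 - X) * (1 - C q * X)) = 1 := by
  have h := congrArg (rescale q) (mk_one_mul_one_sub_eq_one R)
  rw [map_mul, map_sub, map_one, rescale_X] at h
  rw [geomSeries_eq_mul, mul_comm (1 - X : R⟦X⟧), mul_mul_mul_comm, h,
    mk_one_mul_one_sub_eq_one, one_mul]

theorem coeff_coe_mul_one_sub_mul_one_sub (F : R⟦X⟧) (q : R) (N : ℤ) :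
    ((F * ((1 - X) * (1 - C q * X)) : R⟦X⟧) : R⸨X⸩).coeff N
      = (F : R⸨X⸩).coeff N - (1 + q) * (F : R⸨X⸩).coeff (N - 1)
        + q * (F : R⸨X⸩).coeff (N - 2) := by
  have hfac : (((1 - X) * (1 - C q * X) : R⟦X⟧) : R⸨X⸩)
      = 1 - HahnSeries.single 1 (1 + q) + HahnSeries.single 2 q := by
    simp only [coe_mul, coe_sub, coe_one, coe_C, coe_X, HahnSeries.C_apply,
      HahnSeries.single_mul_single]
    rw [show (2 : ℤ) = 1 + 1 from rfl]
    simp only [zero_add, mul_one, sub_mul, mul_sub, one_mul, HahnSeries.single_mul_single,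
      HahnSeries.single_add]
    abel
  rw [coe_mul, hfac, mul_add, mul_sub, mul_one, HahnSeries.coeff_add, HahnSeries.coeff_sub]
  nth_rw 2 [show N = (N - 1) + 1 by ring]
  nth_rw 3 [show N = (N - 2) + 2 by ring]
  rw [HahnSeries.coeff_mul_single_add, HahnSeries.coeff_mul_single_add]
  ring

/-- `P(T)/((1-T)(1-qT))`, as a Laurent series so that its coefficients are indexed by `ℤ`
(vanishing at negative indices). -/
def zetaFunction (q : R) (P : Polynomial R) : R⸨X⸩ := ((P : R⟦X⟧) * geomSeries q : R⟦X⟧)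

theorem coeff_coe_eq_zetaFunction (q : R) (P : Polynomial R) (N : ℤ) :
    ((P : R⟦X⟧) : R⸨X⸩).coeff N = (zetaFunction q P).coeff N
      - (1 + q) * (zetaFunction q P).coeff (N - 1) + q * (zetaFunction q P).coeff (N - 2) := by
  rw [zetaFunction, ← coeff_coe_mul_one_sub_mul_one_sub, mul_assoc, geomSeries_mul, mul_one]

theorem zetaFunction_coeff_zero (q : R) (P : Polynomial R) :
    (zetaFunction q P).coeff 0 = P.coeff 0 := by
  rw [zetaFunction, show (0 : ℤ) = ((0 : ℕ) : ℤ) from rfl, coeff_coe_powerSeries]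
  simp [geomSeries]

theorem coeff_coe_natCast_sub (F : R⟦X⟧) (r k : ℕ) :
    (F : R⸨X⸩).coeff ((r : ℤ) - k) = if k ≤ r then coeff (r - k) F else 0 := by
  rw [coeff_coe]
  split_ifs
  · omega
  · rfl
  · rw [show ((r : ℤ) - k).natAbs = r - k by omega]
  · omega

theorem coeff_map_mul_add_pow {S : Type*} [CommRing S] [Algebra R S]
    (F : R⟦X⟧) (a b : S) (r n : ℕ) :
    coeff r (map (algebraMap R S) F * (C b * X + C a) ^ n)
      = ∑ k ∈ Finset.range (n + 1),
          algebraMap R S ((F : R⸨X⸩).coeff (r - k)) * (n.choose k * b ^ k * a ^ (n - k)) := by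
  rw [add_pow, Finset.mul_sum, map_sum]
  refine Finset.sum_congr rfl fun k _ => ?_
  have hterm : map (algebraMap R S) F * ((C b * X) ^ k * C a ^ (n - k) * (n.choose k : S⟦X⟧))
      = C (n.choose k * b ^ k * a ^ (n - k)) * (map (algebraMap R S) F * X ^ k) := by
    simp only [map_mul, map_pow, map_natCast]
    ring
  rw [hterm, coeff_C_mul, coeff_mul_X_pow', coeff_coe_natCast_sub, mul_comm]
  split_ifs <;> simp

end PowerSeries

section ZetaIdentity

open PowerSeries

abbrev ZetaIdentity (q : ℝ) (n r : ℕ) (e : ℂ) (W : Cxy) (P : Polynomial ℂ) : Prop :=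
  coeff r (polyToSeries P * geomQ q * bodySeries n) = MvPolynomial.C e * (W - MvPolynomial.X 0 ^ n)

theorem polyToSeries_mul_geomQ (q : ℝ) (P : Polynomial ℂ) :
    polyToSeries P * geomQ q = map (algebraMap ℂ Cxy) ((P : ℂ⟦X⟧) * geomSeries (q : ℂ)) := by
  rw [map_mul]
  rfl

theorem bodySeries_eq (n : ℕ) :
    bodySeries n = (C (MvPolynomial.X 0 - MvPolynomial.X 1) * X + C (MvPolynomial.X 1)) ^ n := by
  rw [bodySeries, map_sub]
  ring

theorem algHom_coeff_zeta {R : Type*} [CommRing R] [Algebra ℂ R] (φ : Cxy →ₐ[ℂ] R)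
    (q : ℝ) (P : Polynomial ℂ) (r n : ℕ) :
    φ (coeff r (polyToSeries P * geomQ q * bodySeries n))
      = ∑ k ∈ Finset.range (n + 1), algebraMap ℂ R ((zetaFunction (q : ℂ) P).coeff (r - k)) *
          (n.choose k * φ (MvPolynomial.X 0 - MvPolynomial.X 1) ^ k *
            φ (MvPolynomial.X 1) ^ (n - k)) := by
  have hmap : map (φ : Cxy →+* R) (polyToSeries P * geomQ q * bodySeries n)
      = map (algebraMap ℂ R) ((P : ℂ⟦X⟧) * geomSeries (q : ℂ)) *
          (C (φ (MvPolynomial.X 0 - MvPolynomial.X 1)) * X + C (φ (MvPolynomial.X 1))) ^ n := by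
    rw [polyToSeries_mul_geomQ, bodySeries_eq, map_mul, ← RingHom.comp_apply (map _),
      ← map_comp, AlgHom.comp_algebraMap]
    simp only [map_pow, map_add, map_mul, map_C, map_X]
    rfl
  rw [← AlgHom.coe_toRingHom, ← coeff_map, hmap, coeff_map_mul_add_pow]
  rfl

end ZetaIdentity

def sigmaHom (q : ℝ) : Cxy →ₐ[ℂ] Cxy :=
  MvPolynomial.aeval
    ![MvPolynomial.C ((Real.sqrt q : ℂ))⁻¹ *
        (MvPolynomial.X 0 + MvPolynomial.C ((q : ℂ) - 1) * MvPolynomial.X 1),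
      MvPolynomial.C ((Real.sqrt q : ℂ))⁻¹ * (MvPolynomial.X 0 - MvPolynomial.X 1)]

def dehomogenize : Cxy →ₐ[ℂ] Polynomial ℂ := MvPolynomial.aeval ![Polynomial.X + 1, 1]

section Specialization

open Polynomial

@[simp] theorem dehomogenize_X_zero : dehomogenize (MvPolynomial.X 0) = X + 1 := by
  simp [dehomogenize]

@[simp] theorem dehomogenize_X_one : dehomogenize (MvPolynomial.X 1) = 1 := by
  simp [dehomogenize]

@[simp] theorem dehomogenize_X_sub : dehomogenize (MvPolynomial.X 0 - MvPolynomial.X 1) = X := by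
  simp [dehomogenize]

theorem dehomogenize_sigmaHom_X_zero (q : ℝ) :
    dehomogenize (sigmaHom q (MvPolynomial.X 0)) = C ((Real.sqrt q : ℂ))⁻¹ * (X + C (q : ℂ)) := by
  simp [dehomogenize, sigmaHom]

theorem dehomogenize_sigmaHom_X_one (q : ℝ) :
    dehomogenize (sigmaHom q (MvPolynomial.X 1)) = C ((Real.sqrt q : ℂ))⁻¹ * X := by
  simp [dehomogenize, sigmaHom]

theorem dehomogenize_sigmaHom_X_sub {q : ℝ} (hq : 0 ≤ q) :
    dehomogenize (sigmaHom q (MvPolynomial.X 0 - MvPolynomial.X 1)) = C (Real.sqrt q : ℂ) := by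
  have hs : (Real.sqrt q : ℂ) ^ 2 = q := by exact_mod_cast Real.sq_sqrt hq
  rw [map_sub, map_sub, dehomogenize_sigmaHom_X_zero, dehomogenize_sigmaHom_X_one, ← mul_sub,
    add_sub_cancel_left, ← C_mul, ← hs, sq, ← mul_assoc, inv_mul_mul_self]

theorem coeff_sum_range_C_mul_X_pow {R : Type*} [Semiring R] (c : ℕ → R) {n j : ℕ}
    (hj : j ≤ n) : (∑ k ∈ Finset.range (n + 1), C (c k) * X ^ k).coeff j = c j := by
  simp [finsetSum_coeff, Nat.lt_succ_of_le hj]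

theorem coeff_sum_range_C_mul_X_pow_sub {R : Type*} [Semiring R] (c : ℕ → R) {n j : ℕ}
    (hj : j ≤ n) :
    (∑ k ∈ Finset.range (n + 1), C (c k) * X ^ (n - k)).coeff j = c (n - j) := by
  have hreflect : ∑ k ∈ Finset.range (n + 1), C (c k) * X ^ (n - k)
      = ∑ k ∈ Finset.range (n + 1), C (c (n - k)) * X ^ k := by
    rw [← Finset.sum_range_reflect]
    refine Finset.sum_congr rfl fun k hk => ?_
    rw [Finset.mem_range] at hk
    rw [Nat.add_sub_cancel, Nat.sub_sub_self (by omega)]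
  rw [hreflect, coeff_sum_range_C_mul_X_pow _ hj]

theorem eval_eq_eval_inv_mul {K : Type*} [Field K] {P : K[X]} {G : ℕ} {c t : K}
    (hdeg : P.natDegree ≤ G) (hsymm : ∀ i ≤ G, c * P.coeff i = t ^ i * P.coeff (G - i))
    {T : K} (htT : t * T ≠ 0) :
    P.eval T = P.eval (1 / (t * T)) * c * T ^ G := by
  have hlt : P.natDegree < G + 1 := Nat.lt_succ_of_le hdeg
  rw [eval_eq_sum_range' hlt, eval_eq_sum_range' hlt, Finset.sum_mul, Finset.sum_mul,
    ← Finset.sum_range_reflect]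
  refine Finset.sum_congr rfl fun i hi => ?_
  rw [Finset.mem_range] at hi
  have ht : t ≠ 0 := left_ne_zero_of_mul htT
  have hT : T ≠ 0 := right_ne_zero_of_mul htT
  rw [Nat.add_sub_cancel, ← pow_sub_mul_pow T (show i ≤ G by omega), div_pow, one_pow, mul_pow]
  field_simp
  linear_combination -hsymm i (by omega)

variable {q : ℝ} {n r d : ℕ} {e : ℂ} {W : Cxy} {P : ℂ[X]}

theorem ZetaIdentity.dehomogenize_sum (hP : ZetaIdentity q n r e W P) :
    ∑ k ∈ Finset.range (n + 1), C ((zetaFunction (q : ℂ) P).coeff (r - k) * n.choose k) * X ^ k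
      = C e * (dehomogenize W - (X + 1) ^ n) := by
  have h := congrArg dehomogenize hP
  rw [algHom_coeff_zeta, dehomogenize_X_sub, dehomogenize_X_one, map_mul,
    MvPolynomial.algHom_C, map_sub, map_pow, dehomogenize_X_zero, algebraMap_eq] at h
  rw [← h]
  refine Finset.sum_congr rfl fun k _ => ?_
  simp only [C_mul, C_eq_natCast, one_pow, mul_one]
  ring

theorem ZetaIdentity.dehomogenize_sigmaHom_sum (hP : ZetaIdentity q n r e W P) (hq : 0 ≤ q)
    (hinv : actSigma q W = W) :
    ∑ k ∈ Finset.range (n + 1), C ((zetaFunction (q : ℂ) P).coeff (r - k) * n.choose k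
        * (Real.sqrt q : ℂ) ^ k * (Real.sqrt q : ℂ)⁻¹ ^ (n - k)) * X ^ (n - k)
      = C e * (dehomogenize W - (C (Real.sqrt q : ℂ)⁻¹ * (X + C (q : ℂ))) ^ n) := by
  have h := congrArg (dehomogenize.comp (sigmaHom q)) hP
  have hσW : sigmaHom q W = W := hinv
  rw [algHom_coeff_zeta] at h
  simp only [AlgHom.comp_apply] at h
  rw [dehomogenize_sigmaHom_X_sub hq, dehomogenize_sigmaHom_X_one] at h
  simp only [map_mul, map_sub, map_pow, hσW, MvPolynomial.algHom_C, AlgHom.commutes,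
    dehomogenize_sigmaHom_X_zero, algebraMap_eq] at h
  rw [← h]
  refine Finset.sum_congr rfl fun k _ => ?_
  simp only [C_mul, C_pow, C_eq_natCast, mul_pow]
  ring

theorem ZetaIdentity.zetaFunction_coeff_reflect (hP : ZetaIdentity q n r e W P) (hq : 0 < q)
    (hinv : actSigma q W = W) {j : ℕ} (hj : j ≤ n) :
    (Real.sqrt q : ℂ) ^ n * ((zetaFunction (q : ℂ) P).coeff (r - j) + e)
      = (q : ℂ) ^ (n - j) * ((zetaFunction (q : ℂ) P).coeff (r - n + j) + e) := by
  -- `W(X+1,1)` occurs on both sides, so it drops out of the difference.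
  have key := congrArg (coeff · j)
    (congrArg₂ (· - ·) hP.dehomogenize_sum (hP.dehomogenize_sigmaHom_sum hq.le hinv))
  simp only [coeff_sub, coeff_sum_range_C_mul_X_pow _ hj, coeff_sum_range_C_mul_X_pow_sub _ hj,
    ← mul_sub, coeff_C_mul, sub_sub_sub_cancel_left, mul_pow, ← C_pow, coeff_X_add_C_pow,
    coeff_X_add_one_pow] at key
  have hs : (Real.sqrt q : ℂ) ^ 2 = q := by exact_mod_cast Real.sq_sqrt hq.le
  set Z := zetaFunction (q : ℂ) P
  set s : ℂ := (Real.sqrt q : ℂ)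
  obtain ⟨m, rfl⟩ := Nat.exists_eq_add_of_le hj
  have hs0 : s ≠ 0 := ne_zero_pow two_ne_zero (hs ▸ by exact_mod_cast hq.ne')
  have hc : ((j + m).choose m : ℂ) ≠ 0 := by exact_mod_cast (Nat.choose_pos (by omega)).ne'
  rw [Nat.add_sub_cancel_left, Nat.choose_symm_add, Nat.add_sub_cancel, ← hs, ← pow_mul,
    inv_pow, inv_pow] at key
  rw [Nat.add_sub_cancel_left, ← hs, ← pow_mul,
    show (r : ℤ) - ↑(j + m) + j = r - m by push_cast; ring]
  field_simp at key
  apply mul_left_cancel₀ (pow_ne_zero j hs0)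
  linear_combination key

theorem ZetaIdentity.coeff_reflect (hP : ZetaIdentity q n (n - d) e W P) (hq : 0 < q)
    (hinv : actSigma q W = W) (hd : 2 ≤ d) {i : ℕ} (hi : i + d ≤ n) :
    (Real.sqrt q : ℂ) ^ n * P.coeff i = (q : ℂ) ^ (d - 1 + i)
      * ((P : PowerSeries ℂ) : LaurentSeries ℂ).coeff ((n : ℤ) + 2 - 2 * d - i) := by
  set Z := zetaFunction (q : ℂ) P
  set s : ℂ := (Real.sqrt q : ℂ)
  obtain ⟨d, rfl⟩ : ∃ d', d = d' + 2 := ⟨d - 2, by omega⟩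
  obtain ⟨k, rfl⟩ : ∃ k, n = d + 2 + i + k := ⟨n - (d + 2 + i), by omega⟩
  have h0 : s ^ (d + 2 + i + k) * (Z.coeff i + e)
      = q ^ (d + i + 2) * (Z.coeff (k - d - 2) + e) := by
    convert hP.zetaFunction_coeff_reflect hq hinv (j := k) (by omega) using 4 <;> omega
  have h1 : s ^ (d + 2 + i + k) * (Z.coeff (i - 1) + e)
      = q ^ (d + i + 1) * (Z.coeff (k - d - 1) + e) := by
    convert hP.zetaFunction_coeff_reflect hq hinv (j := k + 1) (by omega) using 4 <;> omega
  have h2 : s ^ (d + 2 + i + k) * (Z.coeff (i - 2) + e)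
      = q ^ (d + i) * (Z.coeff (k - d) + e) := by
    convert hP.zetaFunction_coeff_reflect hq hinv (j := k + 2) (by omega) using 4 <;> omega
  have hpi := coeff_coe_eq_zetaFunction (q : ℂ) P i
  have hpk := coeff_coe_eq_zetaFunction (q : ℂ) P (k - d)
  rw [LaurentSeries.coeff_coe_powerSeries, Polynomial.coeff_coe] at hpi
  rw [show ((d + 2 + i + k : ℕ) : ℤ) + 2 - 2 * ((d + 2 : ℕ) : ℤ) - i = k - d by push_cast; ring,
    show d + 2 - 1 + i = d + i + 1 by omega, hpi, hpk]
  linear_combination h0 - (1 + q) * h1 + q * h2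

theorem ZetaIdentity.coeff_zero_ne_zero (hP : ZetaIdentity q n (n - d) ((q : ℂ) - 1)⁻¹ W P)
    (hq1 : q ≠ 1) (hdn : d ≤ n) {A : ℕ → ℂ} (hAd : A d ≠ 0)
    (hW : W = MvPolynomial.X 0 ^ n +
      ∑ i ∈ Finset.Icc d n, MvPolynomial.C (A i) * MvPolynomial.X 0 ^ (n - i) *
        MvPolynomial.X 1 ^ i) :
    P.coeff 0 ≠ 0 := by
  have h := congrArg (coeff · (n - d)) hP.dehomogenize_sum
  have hsum : ∑ i ∈ Finset.Icc d n, A i * ((n - i).choose (n - d) : ℂ) = A d := by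
    rw [Finset.sum_eq_single_of_mem d (by simp [hdn]), Nat.choose_self, Nat.cast_one, mul_one]
    intro i hi hid
    rw [Finset.mem_Icc] at hi
    rw [Nat.choose_eq_zero_of_lt (by omega), Nat.cast_zero, mul_zero]
  rw [coeff_sum_range_C_mul_X_pow _ (Nat.sub_le n d), sub_self, zetaFunction_coeff_zero] at h
  simp only [hW, map_add, map_pow, map_sum, map_mul, dehomogenize_X_zero, dehomogenize_X_one,
    MvPolynomial.algHom_C, algebraMap_eq, one_pow, mul_one, add_sub_cancel_left, coeff_C_mul,
    finsetSum_coeff, coeff_X_add_one_pow, hsum] at h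
  intro h0
  rw [h0, zero_mul, eq_comm, mul_eq_zero] at h
  have hq1' : (q : ℂ) - 1 ≠ 0 := sub_ne_zero.mpr (by exact_mod_cast hq1)
  exact h.elim (inv_ne_zero hq1') hAd

theorem ZetaIdentity.two_mul_le_add_two (hP : ZetaIdentity q n (n - d) e W P) (hq : 0 < q)
    (hinv : actSigma q W = W) (hd : 2 ≤ d) (hdn : d ≤ n) (h0 : P.coeff 0 ≠ 0) :
    2 * d ≤ n + 2 := by
  by_contra hlt
  have h := hP.coeff_reflect hq hinv hd (i := 0) (by omega)
  rw [PowerSeries.coeff_coe, if_pos (by omega), mul_zero] at h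
  have hs0 : (Real.sqrt q : ℂ) ^ n ≠ 0 :=
    pow_ne_zero _ (Complex.ofReal_ne_zero.mpr (Real.sqrt_ne_zero'.mpr hq))
  exact h0 ((mul_eq_zero.mp h).resolve_left hs0)

theorem ZetaIdentity.natDegree_le (hP : ZetaIdentity q n (n - d) e W P) (hq : 0 < q)
    (hinv : actSigma q W = W) (hd : 2 ≤ d) (hdeg : P.degree ≤ (n - d : ℕ)) :
    P.natDegree ≤ n + 2 - 2 * d := by
  rw [natDegree_le_iff_coeff_eq_zero]
  intro i hi
  by_cases hid : i + d ≤ n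
  · have h := hP.coeff_reflect hq hinv hd hid
    rw [PowerSeries.coeff_coe, if_pos (by omega), mul_zero] at h
    have hs0 : (Real.sqrt q : ℂ) ^ n ≠ 0 :=
      pow_ne_zero _ (Complex.ofReal_ne_zero.mpr (Real.sqrt_ne_zero'.mpr hq))
    exact (mul_eq_zero.mp h).resolve_left hs0
  · exact coeff_eq_zero_of_degree_lt (hdeg.trans_lt (by exact_mod_cast (by omega : n - d < i)))

theorem ZetaIdentity.coeff_symm (hP : ZetaIdentity q n (n - d) e W P) (hq : 0 < q)
    (hinv : actSigma q W = W) (hd : 2 ≤ d) (hG : 2 * d ≤ n + 2) {i : ℕ}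
    (hi : i ≤ n + 2 - 2 * d) :
    (Real.sqrt q : ℂ) ^ (n + 2 - 2 * d) * P.coeff i
      = (q : ℂ) ^ i * P.coeff (n + 2 - 2 * d - i) := by
  have h := hP.coeff_reflect hq hinv hd (i := i) (by omega)
  rw [show (n : ℤ) + 2 - 2 * d - i = ((n + 2 - 2 * d - i : ℕ) : ℤ) by omega,
    LaurentSeries.coeff_coe_powerSeries, Polynomial.coeff_coe] at h
  have hs : (Real.sqrt q : ℂ) ^ 2 = q := by exact_mod_cast Real.sq_sqrt hq.le
  apply mul_left_cancel₀ (pow_ne_zero (d - 1) (by exact_mod_cast hq.ne' : (q : ℂ) ≠ 0))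
  calc (q : ℂ) ^ (d - 1) * ((Real.sqrt q : ℂ) ^ (n + 2 - 2 * d) * P.coeff i)
      = (Real.sqrt q : ℂ) ^ n * P.coeff i := by
        rw [← hs, ← pow_mul, ← mul_assoc, ← pow_add]
        congr 2
        omega
    _ = (q : ℂ) ^ (d - 1) * ((q : ℂ) ^ i * P.coeff (n + 2 - 2 * d - i)) := by
        rw [h, pow_add, mul_assoc]

end Specialization

theorem zeta_functional_equation (q : ℝ) (hq0 : 0 < q) (hq1 : q ≠ 1)
    (n d : ℕ) (hd2 : 2 ≤ d) (hdn : d ≤ n) (A : ℕ → ℂ) (hAd : A d ≠ 0) (W : Cxy)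
    (hW : W = MvPolynomial.X 0 ^ n +
      ∑ i ∈ Finset.Icc d n, MvPolynomial.C (A i) * MvPolynomial.X 0 ^ (n - i) *
        MvPolynomial.X 1 ^ i)
    (hinv : actSigma q W = W)
    (P : Polynomial ℂ) (hP : IsZetaPoly q n d W P) :
    0 ≤ (n : ℤ) + 2 - 2 * (d : ℤ) ∧
    ∀ T : ℂ, T ≠ 0 →
      P.eval T = P.eval (1 / ((q : ℂ) * T)) *
        ((q ^ ((n : ℝ) / 2 + 1 - (d : ℝ)) : ℝ) : ℂ) * T ^ ((n : ℤ) + 2 - 2 * (d : ℤ)) := by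
  obtain ⟨hdeg, hP⟩ : P.degree ≤ (n - d : ℕ) ∧ ZetaIdentity q n (n - d) ((q : ℂ) - 1)⁻¹ W P := hP
  have hG := hP.two_mul_le_add_two hq0 hinv hd2 hdn (hP.coeff_zero_ne_zero hq1 hdn hAd hW)
  refine ⟨by omega, fun T hT => ?_⟩
  have hrpow : ((q ^ ((n : ℝ) / 2 + 1 - (d : ℝ)) : ℝ) : ℂ)
      = (Real.sqrt q : ℂ) ^ (n + 2 - 2 * d) := by
    rw [← Complex.ofReal_pow, Real.sqrt_eq_rpow, ← Real.rpow_natCast, ← Real.rpow_mul hq0.le,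
      Nat.cast_sub hG]
    push_cast
    ring_nf
  rw [hrpow, show (n : ℤ) + 2 - 2 * d = ((n + 2 - 2 * d : ℕ) : ℤ) by omega, zpow_natCast]
  exact eval_eq_eval_inv_mul (hP.natDegree_le hq0 hinv hd2 hdeg)
    (fun i hi => hP.coeff_symm hq0 hinv hd2 hG hi) (mul_ne_zero (by exact_mod_cast hq0.ne') hT)
end
end
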